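/- Let X be a connected simple graph with capacity function c assigning a positive integer to each edge, let B be a cut, and let n ≥ 1. Then there are only finitely many n-thin cuts A that are not nested with B. -/

import Mathlib

open Classical

/-- The set of edges of `G` with one endpoint in `A` and one in the complement of `A`. -/
def cutEdges {V : Type*} (G : SimpleGraph V) (A : Set V) : Set (Sym2 V) :=
  {e | e ∈ G.edgeSet ∧ ∃ u v, e = s(u, v) ∧ u ∈ A ∧ v ∉ A}

/-- The capacity of a cut: the sum of the capacities of the edges across it. -/
noncomputable def cutCap {V : Type*} (G : SimpleGraph V) (c : Sym2 V → ℕ) (A : Set V) : ℕ :=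
  ∑ᶠ e ∈ cutEdges G A, c e

/-- A cut: a nonempty proper subset of the vertices with finite edge boundary. -/
def IsCut {V : Type*} (G : SimpleGraph V) (A : Set V) : Prop :=
  A ≠ ∅ ∧ A ≠ Set.univ ∧ (cutEdges G A).Finite

/-- Two subsets of `V` are nested if at least one of the four corners is empty. -/
def Nested {V : Type*} (A B : Set V) : Prop :=
  A ∩ B = ∅ ∨ A ∩ Bᶜ = ∅ ∨ Aᶜ ∩ B = ∅ ∨ Aᶜ ∩ Bᶜ = ∅

/-- Membership in the Boolean subalgebra of `Set V` generated by a family `F`: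
the smallest family containing `F`, `∅` and `univ`, closed under union,
intersection and complement. -/
inductive BoolGen {V : Type*} (F : Set (Set V)) : Set V → Prop
  | base {A : Set V} : A ∈ F → BoolGen F A
  | empty : BoolGen F ∅
  | univ : BoolGen F Set.univ
  | union {A B : Set V} : BoolGen F A → BoolGen F B → BoolGen F (A ∪ B)
  | inter {A B : Set V} : BoolGen F A → BoolGen F B → BoolGen F (A ∩ B)
  | compl {A : Set V} : BoolGen F A → BoolGen F Aᶜ

/-- A cut is `n`-thin if it has capacity `n` and does not belong to the Boolean
subalgebra `B_{n-1}` generated by the cuts of capacity at most `n - 1`. -/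
def IsThin {V : Type*} (G : SimpleGraph V) (c : Sym2 V → ℕ) (n : ℕ) (A : Set V) : Prop :=
  IsCut G A ∧ cutCap G c A = n ∧
    ¬ BoolGen {B | IsCut G B ∧ cutCap G c B ≤ n - 1} A

/-!
A thin cut `A` induces connected subgraphs on both sides: if `A` fell apart into two pieces with
no edge between them, both pieces would be cuts of positive and hence smaller capacity, and `A`
would lie in `B_{n-1}`. So if `A` is not nested with `B`, a path inside `A` from `A ∩ B` to
`A ∩ B*` crosses `δB`, and `A` contains an endpoint `x` of an edge of `δB`; likewise `A*`
contains such an endpoint `y`. There are finitely many such pairs, and for fixed `x`, `y` there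
are finitely many bonds (cuts with both sides connected) separating `x` from `y` with at most
`n` edges: every such bond contains an edge of a fixed `x`–`y` path, and deleting that edge
leaves a bond of the same kind with at most `n - 1` edges.
-/

section

open SimpleGraph

variable {V : Type*} {G : SimpleGraph V} {c : Sym2 V → ℕ} {A A₁ A₂ B : Set V} {x y : V}

lemma mk_mem_cutEdges {u v : V} (h : G.Adj u v) (hu : u ∈ A) (hv : v ∉ A) :
    s(u, v) ∈ cutEdges G A :=
  ⟨h, u, v, rfl, hu, hv⟩

lemma cutEdges_compl : cutEdges G Aᶜ = cutEdges G A := by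
  ext e
  constructor <;> rintro ⟨he, u, v, rfl, hu, hv⟩ <;>
    exact ⟨he, v, u, Sym2.eq_swap, by simpa using hv, by simpa using hu⟩

lemma cutEdges_deleteEdges (s : Set (Sym2 V)) :
    cutEdges (G.deleteEdges s) A = cutEdges G A \ s := by
  ext e
  simp only [cutEdges, Set.mem_ofPred_eq, edgeSet_deleteEdges, Set.mem_sdiff]
  tauto

lemma SimpleGraph.Walk.exists_mem_edges_mem_cutEdges (W : G.Walk x y) (hx : x ∈ A)
    (hy : y ∉ A) : ∃ e ∈ W.edges, e ∈ cutEdges G A := by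
  obtain ⟨d, hd, hfst, hsnd⟩ := W.exists_boundary_dart A hx hy
  exact ⟨d.edge, List.mem_map_of_mem hd, mk_mem_cutEdges d.adj hfst hsnd⟩

lemma cutEdges_union_of_not_adj (hA : ∀ u ∈ A₁, ∀ v ∈ A₂, ¬G.Adj u v) :
    cutEdges G (A₁ ∪ A₂) = cutEdges G A₁ ∪ cutEdges G A₂ := by
  ext e
  constructor
  · rintro ⟨he, u, v, rfl, hu | hu, hv⟩
    · exact Or.inl ⟨he, u, v, rfl, hu, fun h => hv (Or.inl h)⟩
    · exact Or.inr ⟨he, u, v, rfl, hu, fun h => hv (Or.inr h)⟩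
  · rintro (⟨he, u, v, rfl, hu, hv⟩ | ⟨he, u, v, rfl, hu, hv⟩)
    · exact ⟨he, u, v, rfl, Or.inl hu, by rintro (h | h); exacts [hv h, hA u hu v h he]⟩
    · exact ⟨he, u, v, rfl, Or.inr hu, by rintro (h | h); exacts [hA v h u hu he.symm, hv h]⟩

lemma disjoint_cutEdges_of_not_adj (hd : Disjoint A₁ A₂)
    (hA : ∀ u ∈ A₁, ∀ v ∈ A₂, ¬G.Adj u v) : Disjoint (cutEdges G A₁) (cutEdges G A₂) := by
  rw [Set.disjoint_left]
  rintro _ ⟨he, u, v, rfl, hu, hv⟩ ⟨-, u', v', huv, hu', hv'⟩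
  rcases Sym2.eq_iff.1 huv with ⟨rfl, rfl⟩ | ⟨rfl, rfl⟩
  · exact Set.disjoint_left.1 hd hu hu'
  · exact hA u hu v hu' he

lemma le_cutCap (hfin : (cutEdges G A).Finite) {e : Sym2 V} (he : e ∈ cutEdges G A) :
    c e ≤ cutCap G c A := by
  rw [cutCap, finsum_mem_eq_finite_toFinset_sum _ hfin]
  exact Finset.single_le_sum (fun _ _ => Nat.zero_le _) (hfin.mem_toFinset.2 he)

lemma cutCap_compl : cutCap G c Aᶜ = cutCap G c A := by
  rw [cutCap, cutCap, cutEdges_compl]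

lemma cutCap_union_of_not_adj (hfin : (cutEdges G (A₁ ∪ A₂)).Finite) (hd : Disjoint A₁ A₂)
    (hA : ∀ u ∈ A₁, ∀ v ∈ A₂, ¬G.Adj u v) :
    cutCap G c (A₁ ∪ A₂) = cutCap G c A₁ + cutCap G c A₂ := by
  rw [cutEdges_union_of_not_adj hA] at hfin
  rw [cutCap, cutEdges_union_of_not_adj hA, finsum_mem_union (disjoint_cutEdges_of_not_adj hd hA)
    (hfin.subset Set.subset_union_left) (hfin.subset Set.subset_union_right)]
  rfl

lemma encard_cutEdges_le_cutCap (hc : ∀ e ∈ G.edgeSet, 0 < c e)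
    (hfin : (cutEdges G A).Finite) : (cutEdges G A).encard ≤ cutCap G c A := by
  rw [hfin.encard_eq_coe_toFinset_card, cutCap, finsum_mem_eq_finite_toFinset_sum _ hfin,
    Finset.card_eq_sum_ones]
  exact_mod_cast Finset.sum_le_sum fun e he => hc e (hfin.mem_toFinset.1 he).1

lemma cutCap_pos (hG : G.Connected) (hc : ∀ e ∈ G.edgeSet, 0 < c e) (hA : IsCut G A) :
    0 < cutCap G c A := by
  obtain ⟨hne, hnu, hfin⟩ := hA
  obtain ⟨a, ha⟩ := Set.nonempty_iff_ne_empty.2 hne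
  obtain ⟨b, hb⟩ := (Set.ne_univ_iff_exists_notMem A).1 hnu
  obtain ⟨W⟩ := hG.preconnected a b
  obtain ⟨e, -, he⟩ := W.exists_mem_edges_mem_cutEdges ha hb
  exact (hc e he.1).trans_le (le_cutCap hfin he)

lemma reachable_of_preconnected_induce (hA : (G.induce A).Preconnected) {u v : V} (hu : u ∈ A)
    (hv : v ∈ A) : G.Reachable u v :=
  (hA ⟨u, hu⟩ ⟨v, hv⟩).map (Embedding.induce A).toHom

lemma induce_deleteEdges_of_subset_cutEdges {s : Set (Sym2 V)} (hs : s ⊆ cutEdges G A) :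
    (G.deleteEdges s).induce A = G.induce A := by
  ext ⟨u, hu⟩ ⟨v, hv⟩
  simp only [comap_adj, Function.Embedding.subtype_apply, deleteEdges_adj, and_iff_left_iff_imp]
  intro _ he
  obtain ⟨-, a, b, hab, ha, hb⟩ := hs he
  rcases Sym2.eq_iff.1 hab with ⟨rfl, rfl⟩ | ⟨rfl, rfl⟩ <;> contradiction

lemma eq_setOf_reachable_of_cutEdges_eq_empty (hx : x ∈ A) (hA : (G.induce A).Preconnected)
    (h : cutEdges G A = ∅) : A = {z | G.Reachable x z} := by
  refine Set.Subset.antisymm (fun z hz => reachable_of_preconnected_induce hA hx hz) ?_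
  rintro z ⟨W⟩
  by_contra hz
  obtain ⟨e, -, he⟩ := W.exists_mem_edges_mem_cutEdges hx hz
  exact (h ▸ he : e ∈ (∅ : Set (Sym2 V)))

lemma cutEdges_eq_empty_of_not_reachable (hx : x ∈ A) (hy : y ∉ A)
    (hA : (G.induce A).Preconnected) (hAc : (G.induce Aᶜ).Preconnected)
    (hxy : ¬G.Reachable x y) : cutEdges G A = ∅ := by
  refine Set.eq_empty_iff_forall_notMem.2 ?_
  rintro _ ⟨he, u, v, rfl, hu, hv⟩
  exact hxy ((reachable_of_preconnected_induce hA hx hu).trans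
    (he.reachable.trans (reachable_of_preconnected_induce hAc hv hy)))

def separatingBonds (G : SimpleGraph V) (x y : V) (n : ℕ) : Set (Set V) :=
  {A | x ∈ A ∧ y ∉ A ∧ (G.induce A).Preconnected ∧ (G.induce Aᶜ).Preconnected ∧
    (cutEdges G A).encard ≤ n}

lemma mem_separatingBonds_deleteEdges {n : ℕ} (hA : A ∈ separatingBonds G x y (n + 1))
    {e : Sym2 V} (he : e ∈ cutEdges G A) : A ∈ separatingBonds (G.deleteEdges {e}) x y n := by
  obtain ⟨hx, hy, hAconn, hAcconn, hcard⟩ := hA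
  have hs : {e} ⊆ cutEdges G A := Set.singleton_subset_iff.2 he
  refine ⟨hx, hy, ?_, ?_, ?_⟩
  · rwa [induce_deleteEdges_of_subset_cutEdges hs]
  · rwa [induce_deleteEdges_of_subset_cutEdges (by rwa [cutEdges_compl])]
  · rw [cutEdges_deleteEdges, ← ENat.add_le_add_iff_right ENat.one_ne_top,
      Set.encard_sdiff_singleton_add_one he]
    exact_mod_cast hcard

theorem finite_separatingBonds (G : SimpleGraph V) (x y : V) (n : ℕ) :
    (separatingBonds G x y n).Finite := by
  induction n generalizing G with
  | zero =>
    refine (Set.finite_singleton {z | G.Reachable x z}).subset fun A ⟨hx, _, hA, _, hcard⟩ => ?_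
    exact eq_setOf_reachable_of_cutEdges_eq_empty hx hA
      (Set.encard_eq_zero.1 (nonpos_iff_eq_zero.1 hcard))
  | succ m ih =>
    by_cases hxy : G.Reachable x y
    · obtain ⟨W⟩ := hxy
      refine (W.edges.finite_toSet.biUnion fun e _ => ih (G.deleteEdges {e})).subset
        fun A hA => ?_
      obtain ⟨e, heW, he⟩ := W.exists_mem_edges_mem_cutEdges hA.1 hA.2.1
      exact Set.mem_biUnion heW (mem_separatingBonds_deleteEdges hA he)
    · refine (Set.finite_singleton {z | G.Reachable x z}).subset
        fun A ⟨hx, hy, hA, hAc, _⟩ => ?_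
      exact eq_setOf_reachable_of_cutEdges_eq_empty hx hA
        (cutEdges_eq_empty_of_not_reachable hx hy hA hAc hxy)

lemma IsThin.compl {n : ℕ} (h : IsThin G c n A) : IsThin G c n Aᶜ := by
  obtain ⟨⟨hne, hnu, hfin⟩, hcap, hnot⟩ := h
  refine ⟨⟨?_, ?_, by rwa [cutEdges_compl]⟩, cutCap_compl.trans hcap, fun hb => ?_⟩
  · rwa [Ne, Set.compl_empty_iff]
  · rwa [Ne, Set.compl_univ_iff]
  · exact hnot (by simpa using hb.compl)

lemma boolGen_union_of_not_adj (hG : G.Connected) (hc : ∀ e ∈ G.edgeSet, 0 < c e)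
    (h₁ : A₁.Nonempty) (h₂ : A₂.Nonempty) (hd : Disjoint A₁ A₂)
    (hA : ∀ u ∈ A₁, ∀ v ∈ A₂, ¬G.Adj u v) (hfin : (cutEdges G (A₁ ∪ A₂)).Finite) :
    BoolGen {B | IsCut G B ∧ cutCap G c B ≤ cutCap G c (A₁ ∪ A₂) - 1} (A₁ ∪ A₂) := by
  have hfin' := hfin
  rw [cutEdges_union_of_not_adj hA] at hfin'
  obtain ⟨a, ha⟩ := h₁
  obtain ⟨b, hb⟩ := h₂
  have hcut₁ : IsCut G A₁ := ⟨Set.nonempty_iff_ne_empty.1 ⟨a, ha⟩,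
    (Set.ne_univ_iff_exists_notMem _).2 ⟨b, Set.disjoint_right.1 hd hb⟩,
    hfin'.subset Set.subset_union_left⟩
  have hcut₂ : IsCut G A₂ := ⟨Set.nonempty_iff_ne_empty.1 ⟨b, hb⟩,
    (Set.ne_univ_iff_exists_notMem _).2 ⟨a, Set.disjoint_left.1 hd ha⟩,
    hfin'.subset Set.subset_union_right⟩
  have hsum := cutCap_union_of_not_adj (c := c) hfin hd hA
  have hpos₁ := cutCap_pos hG hc hcut₁
  have hpos₂ := cutCap_pos hG hc hcut₂
  exact .union (.base ⟨hcut₁, by omega⟩) (.base ⟨hcut₂, by omega⟩)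

lemma IsThin.preconnected_induce (hG : G.Connected) (hc : ∀ e ∈ G.edgeSet, 0 < c e) {n : ℕ}
    (h : IsThin G c n A) : (G.induce A).Preconnected := by
  by_contra hcon
  obtain ⟨⟨a, ha⟩, ⟨b, hb⟩, hab⟩ : ∃ u v, ¬(G.induce A).Reachable u v := by
    simpa [Preconnected] using hcon
  let A₁ := {z | ∃ hz : z ∈ A, (G.induce A).Reachable ⟨a, ha⟩ ⟨z, hz⟩}
  have hA₁ : A₁ ⊆ A := fun z ⟨hz, _⟩ => hz
  have hna : ∀ u ∈ A₁, ∀ v ∈ A \ A₁, ¬G.Adj u v := fun u ⟨hu, hau⟩ v ⟨hv, hv₁⟩ huv =>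
    hv₁ ⟨hv, hau.trans (Adj.reachable (induce_adj.2 huv))⟩
  obtain ⟨⟨-, -, hfin⟩, hcap, hnot⟩ := h
  rw [← Set.union_sdiff_cancel hA₁] at hfin
  have key := boolGen_union_of_not_adj (c := c) (A₁ := A₁) (A₂ := A \ A₁) hG hc
    ⟨a, ha, .refl _⟩ ⟨b, hb, fun ⟨_, h⟩ => hab h⟩ Set.disjoint_sdiff_right hna hfin
  rw [Set.union_sdiff_cancel hA₁, hcap] at key
  exact hnot key

def cutVerts (G : SimpleGraph V) (B : Set V) : Set V :=
  {u | ∃ e ∈ cutEdges G B, u ∈ e}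

lemma finite_cutVerts (h : (cutEdges G B).Finite) : (cutVerts G B).Finite :=
  (h.biUnion fun e _ => e.toFinset.finite_toSet).subset
    fun _ ⟨_, he, hu⟩ => Set.mem_biUnion he (Sym2.mem_toFinset.2 hu)

lemma exists_mem_cutVerts_of_preconnected_induce (hA : (G.induce A).Preconnected)
    (h₁ : (A ∩ B).Nonempty) (h₂ : (A ∩ Bᶜ).Nonempty) : (A ∩ cutVerts G B).Nonempty := by
  obtain ⟨p, hpA, hpB⟩ := h₁
  obtain ⟨q, hqA, hqB⟩ := h₂
  obtain ⟨W⟩ := hA ⟨p, hpA⟩ ⟨q, hqA⟩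
  obtain ⟨d, -, hfst, hsnd⟩ := W.exists_boundary_dart {z : A | z.1 ∈ B} hpB hqB
  exact ⟨d.fst, d.fst.2, _, mk_mem_cutEdges d.adj hfst hsnd, Sym2.mem_mk_left _ _⟩

end

theorem finitely_many_crossing_thin_cuts_general {V : Type*} (G : SimpleGraph V) (hG : G.Connected)
    (c : Sym2 V → ℕ) (hc : ∀ e ∈ G.edgeSet, 0 < c e)
    (B : Set V) (hB : IsCut G B) (n : ℕ) :
    {A : Set V | IsThin G c n A ∧ ¬ Nested A B}.Finite := by
  have hS := finite_cutVerts hB.2.2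
  refine (hS.biUnion fun x _ => hS.biUnion fun y _ => finite_separatingBonds G x y n).subset ?_
  rintro A ⟨hA, hAB⟩
  simp only [Nested, not_or, ← Set.nonempty_iff_ne_empty] at hAB
  obtain ⟨h₁, h₂, h₃, h₄⟩ := hAB
  have hconn := hA.preconnected_induce hG hc
  have hconnc := hA.compl.preconnected_induce hG hc
  obtain ⟨x, hxA, hxS⟩ := exists_mem_cutVerts_of_preconnected_induce hconn h₁ h₂
  obtain ⟨y, hyA, hyS⟩ := exists_mem_cutVerts_of_preconnected_induce hconnc h₃ h₄
  refine Set.mem_biUnion hxS (Set.mem_biUnion hyS ⟨hxA, hyA, hconn, hconnc, ?_⟩)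
  exact hA.2.1 ▸ encard_cutEdges_le_cutCap hc hA.1.2.2

/-- For any cut `B` there are only finitely many `n`-thin cuts that are not nested
with `B`. -/
theorem finitely_many_crossing_thin_cuts {V : Type*} (G : SimpleGraph V) (hG : G.Connected)
    (c : Sym2 V → ℕ) (hc : ∀ e ∈ G.edgeSet, 0 < c e)
    (B : Set V) (hB : IsCut G B) (n : ℕ) (hn : 1 ≤ n) :
    {A : Set V | IsThin G c n A ∧ ¬ Nested A B}.Finite :=
  finitely_many_crossing_thin_cuts_general G hG c hc B hB n
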